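/- arXiv:1012.4826 — 3 statements merged into one kernel-verified Lean document; each statement's English description precedes it below -/
import Mathlib

section
/- Let f : ℝ → ℂ be infinitely differentiable with compact support contained in [−b, b] (b > 0). Then the bilateral Laplace transform ℒf is an entire function (complex differentiable at every point of ℂ), and it is of exponential type: there exists C ≥ 0 (one may take C = (2π)^{−1/2}∫_ℝ |f(t)| dt) such that |ℒf(x+iy)| ≤ C e^{b|y|} for all x, y ∈ ℝ. -/
open MeasureTheory Complex Real

/-- The bilateral Laplace transform `(ℒf)(p) = (2π)^{-1/2} ∫_ℝ e^{ipt} f(t) dt`. -/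
noncomputable def bilateralLaplace (f : ℝ → ℂ) (p : ℂ) : ℂ :=
  ((Real.sqrt (2 * π))⁻¹ : ℝ) * ∫ t : ℝ, Complex.exp (Complex.I * p * (t : ℂ)) * f t

/-- Let `f : ℝ → ℂ` be infinitely differentiable with compact support contained in
`[-b, b]` (`b > 0`).  Then the bilateral Laplace transform `ℒf` is an entire function,
and it is of exponential type: with `C = (2π)^{-1/2} ∫_ℝ |f(t)| dt ≥ 0` one has
`|ℒf(x + iy)| ≤ C e^{b|y|}` for all `x, y ∈ ℝ`. -/
theorem bilateralLaplace_entire_of_exponential_type (f : ℝ → ℂ) (hf : ContDiff ℝ (⊤ : ℕ∞) f)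
    (b : ℝ) (hb : 0 < b) (hsupp : Function.support f ⊆ Set.Icc (-b) b) :
    (∀ p : ℂ, DifferentiableAt ℂ (bilateralLaplace f) p) ∧
    (0 ≤ ((Real.sqrt (2 * π))⁻¹ : ℝ) * ∫ t : ℝ, ‖f t‖) ∧
    ∀ x y : ℝ, ‖bilateralLaplace f ((x : ℂ) + (y : ℂ) * Complex.I)‖
      ≤ (((Real.sqrt (2 * π))⁻¹ : ℝ) * ∫ t : ℝ, ‖f t‖) * Real.exp (b * |y|) := by
  have hfc : Continuous f := hf.continuous
  have hcs : HasCompactSupport f :=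
    HasCompactSupport.intro isCompact_Icc (fun x hx => by
      by_contra h; exact hx (hsupp h))
  have hfint : Integrable f := hfc.integrable_of_hasCompactSupport hcs
  have hbd : ∀ t : ℝ, f t ≠ 0 → |t| ≤ b := by
    intro t ht
    have := hsupp ht
    exact abs_le.2 ⟨this.1, this.2⟩
  have hsqrt : (0:ℝ) ≤ (Real.sqrt (2 * π))⁻¹ := inv_nonneg.2 (Real.sqrt_nonneg _)
  set F : ℂ → ℝ → ℂ := fun p t => Complex.exp (Complex.I * p * (t : ℂ)) * f t with hF
  set F' : ℂ → ℝ → ℂ := fun p t =>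
    (Complex.exp (Complex.I * p * (t : ℂ)) * (Complex.I * (t : ℂ))) * f t with hF'
  have hFmeas : ∀ p : ℂ, AEStronglyMeasurable (F p) volume := by
    intro p
    exact ((Complex.continuous_exp.comp (by fun_prop)).mul hfc).aestronglyMeasurable
  have hF'meas : ∀ p : ℂ, AEStronglyMeasurable (F' p) volume := by
    intro p
    exact (((Complex.continuous_exp.comp (by fun_prop)).mul (by fun_prop)).mul
      hfc).aestronglyMeasurable
  have hnorm : ∀ (p : ℂ) (t : ℝ), ‖F p t‖ = Real.exp (-(p.im) * t) * ‖f t‖ := by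
    intro p t
    rw [norm_mul, Complex.norm_exp]
    congr 2
    simp [Complex.mul_re, Complex.mul_im]
    try ring
  have hFint : ∀ p : ℂ, Integrable (F p) := by
    intro p
    refine (hfint.norm.const_mul (Real.exp (|p.im| * b))).mono' (hFmeas p) ?_
    filter_upwards with t
    rw [hnorm]
    rcases eq_or_ne (f t) 0 with h | h
    · simp [h]
    · apply mul_le_mul_of_nonneg_right _ (norm_nonneg _)
      apply Real.exp_le_exp.2
      calc -(p.im) * t ≤ |(-(p.im)) * t| := le_abs_self _
      _ = |p.im| * |t| := by rw [abs_mul, abs_neg]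
      _ ≤ |p.im| * b := mul_le_mul_of_nonneg_left (hbd t h) (abs_nonneg _)
  constructor
  · intro p₀
    have key : HasDerivAt (fun p => ∫ t : ℝ, F p t) (∫ t : ℝ, F' p₀ t) p₀ := by
      have := hasDerivAt_integral_of_dominated_loc_of_deriv_le (μ := volume)
        (F := F) (F' := F') (x₀ := p₀)
        (bound := fun t => (b * Real.exp ((‖p₀‖ + 1) * b)) * ‖f t‖) (Metric.ball_mem_nhds p₀ one_pos)
        (Filter.Eventually.of_forall fun p => hFmeas p) (hFint p₀) (hF'meas p₀)
        ?_ ((hfint.norm.const_mul _)) ?_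
      · exact this.2
      · filter_upwards with t p hp
        rcases eq_or_ne (f t) 0 with h | h
        · simp [hF', h]
          try positivity
        · have htb : |t| ≤ b := hbd t h
          have hpn : ‖p‖ ≤ ‖p₀‖ + 1 := by
            have := mem_ball_iff_norm.1 hp
            calc ‖p‖ = ‖p₀ + (p - p₀)‖ := by ring_nf
            _ ≤ ‖p₀‖ + ‖p - p₀‖ := norm_add_le _ _
            _ ≤ ‖p₀‖ + 1 := by linarith
          have him : |p.im| ≤ ‖p₀‖ + 1 := le_trans (Complex.abs_im_le_norm p) hpn
          have hre : (Complex.I * p * (t:ℂ)).re = -(p.im) * t := by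
            simp [Complex.mul_re, Complex.mul_im]
            try ring
          have heq : ‖F' p t‖ = Real.exp (-(p.im) * t) * (|t| * ‖f t‖) := by
            simp only [hF', norm_mul, Complex.norm_I, Complex.norm_real,
              Real.norm_eq_abs, one_mul]
            rw [Complex.norm_exp, hre]
            ring
          rw [heq]
          have h1 : Real.exp (-(p.im) * t) ≤ Real.exp ((‖p₀‖ + 1) * b) := by
            apply Real.exp_le_exp.2
            calc -(p.im) * t ≤ |(-(p.im)) * t| := le_abs_self _
            _ = |p.im| * |t| := by rw [abs_mul, abs_neg]
            _ ≤ (‖p₀‖ + 1) * b := by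
                apply mul_le_mul him htb (abs_nonneg _) (by positivity)
          calc Real.exp (-(p.im) * t) * (|t| * ‖f t‖)
              ≤ Real.exp ((‖p₀‖ + 1) * b) * (b * ‖f t‖) :=
                mul_le_mul h1 (mul_le_mul_of_nonneg_right htb (norm_nonneg _))
                  (by positivity) (Real.exp_nonneg _)
          _ = b * Real.exp ((‖p₀‖ + 1) * b) * ‖f t‖ := by ring
      · filter_upwards with t p _
        have h1 : HasDerivAt (fun p : ℂ => Complex.I * p * (t:ℂ)) (Complex.I * (t:ℂ)) p := by
          simpa using ((hasDerivAt_id p).const_mul Complex.I).mul_const (t:ℂ)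
        exact (h1.cexp).mul_const (f t)
    have : HasDerivAt (bilateralLaplace f)
        (((Real.sqrt (2 * π))⁻¹ : ℝ) * ∫ t : ℝ, F' p₀ t) p₀ := by
      unfold bilateralLaplace
      exact key.const_mul _
    exact this.differentiableAt
  refine ⟨?_, ?_⟩
  · apply mul_nonneg hsqrt
    apply integral_nonneg
    intro t; exact norm_nonneg _
  · intro x y
    unfold bilateralLaplace
    rw [norm_mul]
    have him : ((x:ℂ) + (y:ℂ) * Complex.I).im = y := by simp
    have hstep : ‖∫ t : ℝ, F ((x:ℂ) + (y:ℂ)*Complex.I) t‖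
        ≤ ∫ t : ℝ, Real.exp (b * |y|) * ‖f t‖ := by
      apply norm_integral_le_of_norm_le (hfint.norm.const_mul _)
      filter_upwards with t
      rw [hnorm, him]
      rcases eq_or_ne (f t) 0 with h | h
      · simp [h]
      · apply mul_le_mul_of_nonneg_right _ (norm_nonneg _)
        apply Real.exp_le_exp.2
        calc -y * t ≤ |(-y) * t| := le_abs_self _
        _ = |y| * |t| := by rw [abs_mul, abs_neg]
        _ ≤ |y| * b := mul_le_mul_of_nonneg_left (hbd t h) (abs_nonneg _)
        _ = b * |y| := mul_comm _ _
    have habs : ‖(((Real.sqrt (2 * π))⁻¹ : ℝ) : ℂ)‖ = (Real.sqrt (2 * π))⁻¹ := by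
      rw [Complex.norm_real, Real.norm_of_nonneg hsqrt]
    rw [habs]
    calc (Real.sqrt (2 * π))⁻¹ * ‖∫ t : ℝ, F ((x:ℂ) + (y:ℂ)*Complex.I) t‖
        ≤ (Real.sqrt (2 * π))⁻¹ * ∫ t : ℝ, Real.exp (b * |y|) * ‖f t‖ :=
          mul_le_mul_of_nonneg_left hstep hsqrt
    _ = ((Real.sqrt (2 * π))⁻¹ * ∫ t : ℝ, ‖f t‖) * Real.exp (b * |y|) := by
        rw [integral_const_mul]
        ring
end

section
/- Mellin–Barnes representation of the exponential: for every real x > 0 and every real c > 0, the function τ ↦ Γ(c+iτ) x^{−(c+iτ)} is Lebesgue integrable on ℝ and (1/(2π)) ∫_ℝ Γ(c+iτ) x^{−(c+iτ)} dτ = e^{−x}, where Γ is the complex Gamma function and x^{w} = e^{w log x} with the real logarithm of x. -/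
/-!
Euler's integral says that `Γ` is the Mellin transform of `t ↦ e^{-t}` on `Re s > 0`, and the
integral in question is the inverse Mellin transform of `Γ` along `Re s = c`, so Mellin inversion
returns `e^{-x}`. What inversion needs is integrability of `Γ` on vertical lines: from
`Γ(s) = Γ(s + 2) / (s (s + 1))` and `‖Γ(s + 2)‖ ≤ Γ(Re s + 2)` one gets
`‖Γ(c + iτ)‖ ≤ Γ(c + 2) / (c² + τ²)`.
-/

open MeasureTheory Complex Real

namespace Complex

lemma norm_Gamma_le_Gamma_re {s : ℂ} (hs : 0 < s.re) : ‖Gamma s‖ ≤ Real.Gamma s.re := by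
  rw [Gamma_eq_integral hs, Real.Gamma_eq_integral hs, GammaIntegral]
  refine (norm_integral_le_integral_norm _).trans_eq <|
    setIntegral_congr_fun measurableSet_Ioi fun t ht => ?_
  rw [norm_mul, norm_cpow_eq_rpow_re_of_pos ht, norm_real, Real.norm_of_nonneg (Real.exp_pos _).le,
    sub_re, one_re]

lemma differentiableAt_Gamma_of_re_pos {s : ℂ} (hs : 0 < s.re) : DifferentiableAt ℂ Gamma s :=
  differentiableAt_Gamma s fun m hm => by
    have : s.re = -m := by simp [hm]
    linarith [m.cast_nonneg (α := ℝ)]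

lemma norm_Gamma_le_div_norm_sq {s : ℂ} (hs : 0 < s.re) :
    ‖Gamma s‖ ≤ Real.Gamma (s.re + 2) / ‖s‖ ^ 2 := by
  have hs0 : s ≠ 0 := fun h => by simp [h] at hs
  have hs1 : s + 1 ≠ 0 := fun h => by
    have : (s + 1).re = 0 := by rw [h, zero_re]
    rw [add_re, one_re] at this
    linarith
  have hrec : Gamma s = Gamma (s + 2) / ((s + 1) * s) := by
    rw [eq_div_iff (mul_ne_zero hs1 hs0), show s + 2 = s + 1 + 1 by ring,
      Gamma_add_one _ hs1, Gamma_add_one _ hs0]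
    ring
  have hnorm : ‖s‖ ≤ ‖s + 1‖ := by
    rw [← sq_le_sq₀ (norm_nonneg _) (norm_nonneg _), Complex.sq_norm, Complex.sq_norm,
      normSq_apply, normSq_apply, add_re, add_im, one_re, one_im]
    nlinarith
  have hGamma : ‖Gamma (s + 2)‖ ≤ Real.Gamma (s.re + 2) := by
    simpa using norm_Gamma_le_Gamma_re (s := s + 2) (by simp; linarith)
  rw [hrec, norm_div, norm_mul, sq]
  exact div_le_div₀ (Real.Gamma_pos_of_pos (by linarith)).le hGamma
    (by positivity) (mul_le_mul_of_nonneg_right hnorm (norm_nonneg _))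

lemma verticalIntegrable_Gamma {σ : ℝ} (hσ : 0 < σ) : VerticalIntegrable Gamma σ := by
  have hre : ∀ τ : ℝ, 0 < ((σ : ℂ) + τ * I).re := fun τ => by simpa using hσ
  have hcont : Continuous fun τ : ℝ => Gamma (σ + τ * I) :=
    continuous_iff_continuousAt.mpr fun τ =>
      (differentiableAt_Gamma_of_re_pos (hre τ)).continuousAt.comp
        (f := fun τ : ℝ => (σ : ℂ) + τ * I) (by fun_prop)
  refine ((integrable_inv_one_add_sq.comp_div hσ.ne').const_mul
    (Real.Gamma (σ + 2) / σ ^ 2)).mono' hcont.aestronglyMeasurable (.of_forall fun τ => ?_)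
  have hnorm : ‖(σ : ℂ) + τ * I‖ ^ 2 = σ ^ 2 * (1 + (τ / σ) ^ 2) := by
    rw [Complex.sq_norm, normSq_add_mul_I]
    field_simp
  calc ‖Gamma (σ + τ * I)‖ ≤ Real.Gamma (σ + 2) / ‖(σ : ℂ) + τ * I‖ ^ 2 := by
        simpa using norm_Gamma_le_div_norm_sq (hre τ)
    _ = Real.Gamma (σ + 2) / σ ^ 2 * (1 + (τ / σ) ^ 2)⁻¹ := by
        rw [hnorm, div_mul_eq_div_div, div_eq_mul_inv]

lemma mellin_exp_neg {s : ℂ} (hs : 0 < s.re) :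
    mellin (fun t : ℝ => (Real.exp (-t) : ℂ)) s = Gamma s := by
  rw [← GammaIntegral_eq_mellin, Gamma_eq_integral hs]

lemma mellinConvergent_exp_neg {s : ℂ} (hs : 0 < s.re) :
    MellinConvergent (fun t : ℝ => (Real.exp (-t) : ℂ)) s :=
  (GammaIntegral_convergent hs).congr_fun (fun t _ => by simp [mul_comm]) measurableSet_Ioi

lemma VerticalIntegrable.integrable_cpow_neg_smul {E : Type*} [NormedAddCommGroup E]
    [NormedSpace ℂ E] {f : ℂ → E} {σ : ℝ} (hf : VerticalIntegrable f σ) {x : ℝ} (hx : 0 < x) :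
    Integrable fun y : ℝ => (x : ℂ) ^ (-(σ + y * I)) • f (σ + y * I) := by
  have hcont : Continuous fun y : ℝ => (x : ℂ) ^ (-(σ + y * I)) :=
    Continuous.const_cpow (by fun_prop) (.inl (by simpa using hx.ne'))
  refine hf.bdd_smul (x ^ (-σ)) hcont.aestronglyMeasurable (.of_forall fun y => ?_)
  simp [norm_cpow_eq_rpow_re_of_pos hx]

end Complex

/-- Mellin–Barnes representation of the exponential: for real `x > 0` and `c > 0`, the
function `τ ↦ Γ(c+iτ) x^{-(c+iτ)}` is Lebesgue integrable on `ℝ` and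
`(1/(2π)) ∫_ℝ Γ(c+iτ) x^{-(c+iτ)} dτ = e^{-x}`, where `x^w = e^{w log x}` with the real
logarithm of `x`. -/
theorem mellin_barnes_exponential (x c : ℝ) (hx : 0 < x) (hc : 0 < c) :
    Integrable (fun τ : ℝ =>
      Complex.Gamma ((c : ℂ) + (τ : ℂ) * Complex.I) *
        Complex.exp (-((c : ℂ) + (τ : ℂ) * Complex.I) * (Real.log x : ℂ))) ∧
    ((1 / (2 * π) : ℝ) : ℂ) *
        ∫ τ : ℝ, Complex.Gamma ((c : ℂ) + (τ : ℂ) * Complex.I) *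
          Complex.exp (-((c : ℂ) + (τ : ℂ) * Complex.I) * (Real.log x : ℂ))
      = (Real.exp (-x) : ℂ) := by
  have hre : ∀ τ : ℝ, 0 < ((c : ℂ) + τ * I).re := fun τ => by simpa using hc
  have hintegrand : (fun τ : ℝ => Gamma (c + τ * I) * cexp (-(c + τ * I) * (Real.log x : ℂ)))
      = fun τ : ℝ => (x : ℂ) ^ (-((c : ℂ) + τ * I)) •
          mellin (fun t : ℝ => (Real.exp (-t) : ℂ)) (c + τ * I) := by
    ext τ
    rw [mellin_exp_neg (hre τ), smul_eq_mul, mul_comm,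
      cpow_def_of_ne_zero (by simpa using hx.ne'), ← ofReal_log hx.le, mul_comm (Real.log x : ℂ)]
  have hmellin : VerticalIntegrable (mellin fun t : ℝ => (Real.exp (-t) : ℂ)) c :=
    (verticalIntegrable_Gamma hc).congr (.of_forall fun τ => (mellin_exp_neg (hre τ)).symm)
  rw [hintegrand]
  refine ⟨hmellin.integrable_cpow_neg_smul hx, ?_⟩
  rw [← mellinInv_mellin_eq c _ hx (mellinConvergent_exp_neg (by simpa using hc)) hmellin
    (by fun_prop), mellinInv, real_smul]
end

section
/- The loop Gamma functional is well defined: let t > 0, let B be Brownian motion with variance parameter t on [0,2π], let μ ∈ L²([0,2π],ℝ) with μ(u) ≥ 0 almost everywhere, and let z : [0,2π] → ℂ with Re z, Im z ∈ L²([0,2π]). Then the complex random variable exp( ∫₀^{2π} B_u z(u) du − ∫₀^{2π} μ(u) e^{B_u} du ) is integrable, so that the loop Gamma functional Γ̂_μ(z) := E[ exp( ∫₀^{2π} B_u z(u) du − ∫₀^{2π} μ(u) e^{B_u} du ) ] is well defined. -/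
open MeasureTheory ProbabilityTheory Real Filter Topology Set
open scoped NNReal ENNReal

/-!
Since `μ ≥ 0`, the modulus of the integrand is at most `exp (∫ B_u Re z(u) du)`. For `h ∈ L¹`,
the right-endpoint Riemann–Stieltjes sums of `B` against `h(u) du` are centred Gaussians of
variance at most `2πt (∫ |h|)²`, so their exponential moments are bounded by
`exp (πt (∫ |h|)²)`. Continuity of the paths makes these sums converge pathwise to
`∫ B_u h(u) du`, so Fatou's lemma bounds `E[exp (∫ B_u h(u) du)]` by the same constant; the same
pathwise convergence yields the measurability in `ω` of every integral involved.
-/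

/-- `B` is a Brownian motion with variance parameter `t` on `[0, 2π]` under `P`:
a continuous centered Gaussian process with `B 0 = 0` and covariance
`E[B_u B_v] = t · min u v`. -/
structure IsBrownianMotion {Ω : Type*} [MeasurableSpace Ω] (P : Measure Ω)
    (t : ℝ) (B : ℝ → Ω → ℝ) : Prop where
  isProbabilityMeasure : IsProbabilityMeasure P
  measurable : ∀ u : ℝ, Measurable (B u)
  start_zero : ∀ ω, B 0 ω = 0
  continuous_paths : ∀ ω, ContinuousOn (fun u => B u ω) (Set.Icc 0 (2 * π))
  gaussian : ∀ (n : ℕ) (c u : Fin n → ℝ), (∀ i, u i ∈ Set.Icc 0 (2 * π)) →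
    P.map (fun ω => ∑ i, c i * B (u i) ω) =
      ProbabilityTheory.gaussianReal 0
        (Real.toNNReal (∑ i, ∑ j, c i * c j * (t * min (u i) (u j))))

section RiemannStieltjes

variable {E : Type*} [NormedAddCommGroup E] {T : ℝ} {n i : ℕ} {h : ℝ → E} {f : ℝ → ℝ}

lemma uniformPartition_mono (hT : 0 ≤ T) : Monotone fun i : ℕ => T * i / n :=
  fun _ _ hij => by dsimp only; gcongr

lemma mul_natCast_div_mem_Icc (hT : 0 ≤ T) (hi : i ≤ n) : T * i / n ∈ Icc 0 T := by
  rcases eq_or_ne n 0 with rfl | -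
  · simp [hT]
  refine ⟨by positivity, div_le_of_le_mul₀ (by positivity) hT ?_⟩
  gcongr

lemma IntervalIntegrable.mono_uniformPartition {g : ℝ → E}
    (hg : IntervalIntegrable g volume 0 T) (hT : 0 ≤ T) (hi : i < n) :
    IntervalIntegrable g volume (T * i / n) (T * (i + 1 : ℕ) / n) := by
  refine hg.mono_set (uIcc_subset_uIcc ?_ ?_) <;> rw [uIcc_of_le hT]
  · exact mul_natCast_div_mem_Icc hT hi.le
  · exact mul_natCast_div_mem_Icc hT hi

variable [NormedSpace ℝ E]

noncomputable def riemannStieltjesSum (T : ℝ) (h : ℝ → E) (f : ℝ → ℝ) (n : ℕ) : E :=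
  ∑ i ∈ Finset.range n, f (T * (i + 1 : ℕ) / n) • ∫ u in T * i / n..T * (i + 1 : ℕ) / n, h u

lemma sum_integral_uniformPartition {g : ℝ → E} (hg : IntervalIntegrable g volume 0 T)
    (hT : 0 ≤ T) (hn : n ≠ 0) :
    ∑ i ∈ Finset.range n, ∫ u in T * i / n..T * (i + 1 : ℕ) / n, g u = ∫ u in 0..T, g u := by
  rw [intervalIntegral.sum_integral_adjacent_intervals (a := fun i : ℕ => T * i / n)
    fun i hi => hg.mono_uniformPartition hT hi]
  simp [hn]

lemma sum_norm_integral_uniformPartition_le (hh : IntervalIntegrable h volume 0 T) (hT : 0 ≤ T) :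
    ∑ i ∈ Finset.range n, ‖∫ u in T * i / n..T * (i + 1 : ℕ) / n, h u‖ ≤
      ∫ u in 0..T, ‖h u‖ := by
  rcases eq_or_ne n 0 with rfl | hn
  · simpa using intervalIntegral.integral_nonneg hT fun u _ => norm_nonneg (h u)
  rw [← sum_integral_uniformPartition hh.norm hT hn]
  gcongr with i
  exact intervalIntegral.norm_integral_le_integral_norm (uniformPartition_mono hT i.le_succ)

lemma norm_smul_integral_sub_integral_smul_le {a b c η : ℝ} (hab : a ≤ b)
    (hh : IntervalIntegrable h volume a b)
    (hfh : IntervalIntegrable (fun u => f u • h u) volume a b)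
    (hf : ∀ u ∈ Ioc a b, dist (f c) (f u) ≤ η) :
    ‖f c • (∫ u in a..b, h u) - ∫ u in a..b, f u • h u‖ ≤ η * ∫ u in a..b, ‖h u‖ := by
  have hch : IntervalIntegrable (fun u => f c • h u) volume a b := hh.smul (f c)
  rw [← intervalIntegral.integral_smul, ← intervalIntegral.integral_sub hch hfh,
    ← intervalIntegral.integral_const_mul]
  refine intervalIntegral.norm_integral_le_of_norm_le hab (ae_of_all _ fun u hu => ?_)
    (hh.norm.const_mul η)
  rw [← sub_smul, norm_smul, ← dist_eq_norm]
  exact mul_le_mul_of_nonneg_right (hf u hu) (norm_nonneg _)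

lemma norm_riemannStieltjesSum_sub_integral_le [CompleteSpace E] {η : ℝ}
    (hh : IntervalIntegrable h volume 0 T) (hf : ContinuousOn f (Icc 0 T)) (hT : 0 ≤ T)
    (hfη : ∀ x ∈ Icc 0 T, ∀ y ∈ Icc 0 T, dist x y ≤ T / n → dist (f x) (f y) ≤ η) (hn : n ≠ 0) :
    ‖riemannStieltjesSum T h f n - ∫ u in 0..T, f u • h u‖ ≤ η * ∫ u in 0..T, ‖h u‖ := by
  have hfh : IntervalIntegrable (fun u => f u • h u) volume 0 T :=
    hh.continuousOn_smul (by rwa [uIcc_of_le hT])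
  rw [riemannStieltjesSum, ← sum_integral_uniformPartition hfh hT hn,
    ← sum_integral_uniformPartition hh.norm hT hn, Finset.mul_sum, ← Finset.sum_sub_distrib]
  refine (norm_sum_le _ _).trans (Finset.sum_le_sum fun i hi => ?_)
  have hi := Finset.mem_range.mp hi
  have hstep : T * (i + 1 : ℕ) / n - T * i / n = T / n := by push_cast; ring
  have hleft := mul_natCast_div_mem_Icc hT hi.le
  have hright := mul_natCast_div_mem_Icc hT hi
  refine norm_smul_integral_sub_integral_smul_le (uniformPartition_mono hT i.le_succ)
    (hh.mono_uniformPartition hT hi) (hfh.mono_uniformPartition hT hi) fun u hu => ?_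
  refine hfη _ hright u ⟨hleft.1.trans hu.1.le, hu.2.trans hright.2⟩ ?_
  rw [Real.dist_eq, abs_of_nonneg (by linarith [hu.2])]
  linarith [hu.1]

theorem tendsto_riemannStieltjesSum [CompleteSpace E] (hh : IntervalIntegrable h volume 0 T)
    (hf : ContinuousOn f (Icc 0 T)) (hT : 0 ≤ T) :
    Tendsto (riemannStieltjesSum T h f) atTop (𝓝 (∫ u in 0..T, f u • h u)) := by
  set K := ∫ u in 0..T, ‖h u‖
  have hK : 0 ≤ K := intervalIntegral.integral_nonneg hT fun u _ => norm_nonneg _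
  rw [Metric.tendsto_atTop]
  intro ε hε
  obtain ⟨δ, hδ, hfδ⟩ := Metric.uniformContinuousOn_iff_le.mp
    (isCompact_Icc.uniformContinuousOn_of_continuous hf) (ε / (K + 1)) (by positivity)
  obtain ⟨N, hN⟩ := exists_nat_gt (T / δ)
  refine ⟨N, fun n hn => ?_⟩
  have hNn : T / δ < n := hN.trans_le (by exact_mod_cast hn)
  have hn0 : (0 : ℝ) < n := (div_nonneg hT hδ.le).trans_lt hNn
  have hmesh : T / n ≤ δ := by
    rw [div_lt_iff₀ hδ] at hNn
    rw [div_le_iff₀ hn0]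
    linarith
  rw [dist_eq_norm]
  calc _ ≤ ε / (K + 1) * K :=
        norm_riemannStieltjesSum_sub_integral_le hh hf hT
          (fun x hx y hy hxy => hfδ x hx y hy (hxy.trans hmesh)) (by exact_mod_cast hn0.ne')
    _ < ε := by
        rw [div_mul_eq_mul_div, div_lt_iff₀ (by positivity)]
        nlinarith

lemma stronglyMeasurable_riemannStieltjesSum {Ω : Type*} [MeasurableSpace Ω] {f : ℝ → Ω → ℝ}
    (hfm : ∀ u, Measurable (f u)) (T : ℝ) (h : ℝ → E) (n : ℕ) :
    StronglyMeasurable fun ω => riemannStieltjesSum T h (fun u => f u ω) n :=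
  Finset.stronglyMeasurable_fun_sum _ fun _ _ => (hfm _).stronglyMeasurable.smul_const _

theorem stronglyMeasurable_intervalIntegral_smul [CompleteSpace E] {Ω : Type*} [MeasurableSpace Ω]
    {f : ℝ → Ω → ℝ} (hh : IntervalIntegrable h volume 0 T) (hT : 0 ≤ T)
    (hfm : ∀ u, Measurable (f u)) (hfc : ∀ ω, ContinuousOn (fun u => f u ω) (Icc 0 T)) :
    StronglyMeasurable fun ω => ∫ u in 0..T, f u ω • h u :=
  stronglyMeasurable_of_tendsto atTop (stronglyMeasurable_riemannStieltjesSum hfm T h)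
    (tendsto_pi_nhds.2 fun ω => tendsto_riemannStieltjesSum hh (hfc ω) hT)

end RiemannStieltjes

lemma MeasureTheory.MemLp.intervalIntegrable {g : ℝ → ℝ} {p : ℝ≥0∞} {a b : ℝ}
    (hg : MemLp g p (volume.restrict (Ioc a b))) (hp : 1 ≤ p) (hab : a ≤ b) :
    IntervalIntegrable g volume a b :=
  (intervalIntegrable_iff_integrableOn_Ioc_of_le hab).2 (hg.integrable hp)

lemma re_intervalIntegral_real_smul {a b : ℝ} {f : ℝ → ℝ} {z : ℝ → ℂ}
    (hfz : IntervalIntegrable (fun u => f u • z u) volume a b) :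
    (∫ u in a..b, f u • z u).re = ∫ u in a..b, f u * (z u).re := by
  have hcomm := Complex.reCLM.intervalIntegral_comp_comm hfz
  simp only [Complex.reCLM_apply, Complex.smul_re, smul_eq_mul] at hcomm
  exact hcomm.symm

lemma lintegral_ofReal_exp_gaussianReal (v : ℝ≥0) :
    ∫⁻ x, ENNReal.ofReal (exp x) ∂gaussianReal 0 v = ENNReal.ofReal (exp (v / 2)) := by
  have hmgf := congrFun (mgf_id_gaussianReal (μ := 0) (v := v)) 1
  simp only [mgf, id, one_mul, zero_add, one_pow, mul_one] at hmgf
  rw [← ofReal_integral_eq_lintegral_ofReal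
    (by simpa using integrable_exp_mul_gaussianReal (μ := 0) (v := v) 1)
    (ae_of_all _ fun x => (exp_pos x).le), hmgf]

lemma sum_sum_mul_mul_min_le {n : ℕ} {t T : ℝ} (ht : 0 ≤ t) (c u : Fin n → ℝ)
    (hu : ∀ i, u i ∈ Icc 0 T) :
    ∑ i, ∑ j, c i * c j * (t * min (u i) (u j)) ≤ t * T * (∑ i, |c i|) ^ 2 := by
  calc ∑ i, ∑ j, c i * c j * (t * min (u i) (u j))
      ≤ ∑ i, ∑ j, |c i| * |c j| * (t * T) := by
        refine Finset.sum_le_sum fun i _ => Finset.sum_le_sum fun j _ => ?_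
        rw [← abs_mul]
        exact mul_le_mul (le_abs_self _)
          (mul_le_mul_of_nonneg_left (min_le_of_left_le (hu i).2) ht)
          (mul_nonneg ht (le_min (hu i).1 (hu j).1)) (abs_nonneg _)
    _ = t * T * (∑ i, |c i|) ^ 2 := by
        rw [sq, Finset.sum_mul_sum, Finset.mul_sum]
        refine Finset.sum_congr rfl fun i _ => ?_
        rw [Finset.mul_sum]
        exact Finset.sum_congr rfl fun j _ => by ring

namespace IsBrownianMotion

variable {Ω : Type*} [MeasurableSpace Ω] {P : Measure Ω} {t : ℝ} {B : ℝ → Ω → ℝ}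

lemma lintegral_exp_sum_le (hB : IsBrownianMotion P t B) (ht : 0 ≤ t) {n : ℕ}
    (c u : Fin n → ℝ) (hu : ∀ i, u i ∈ Icc 0 (2 * π)) :
    ∫⁻ ω, ENNReal.ofReal (exp (∑ i, c i * B (u i) ω)) ∂P ≤
      ENNReal.ofReal (exp (t * (2 * π) * (∑ i, |c i|) ^ 2 / 2)) := by
  have hsum : Measurable fun ω => ∑ i, c i * B (u i) ω :=
    Finset.measurable_fun_sum _ fun i _ => (hB.measurable _).const_mul _
  calc ∫⁻ ω, ENNReal.ofReal (exp (∑ i, c i * B (u i) ω)) ∂P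
      = ∫⁻ x, ENNReal.ofReal (exp x) ∂P.map fun ω => ∑ i, c i * B (u i) ω :=
        (lintegral_map measurable_exp.ennreal_ofReal hsum).symm
    _ ≤ _ := by
        rw [hB.gaussian n c u hu, lintegral_ofReal_exp_gaussianReal, Real.coe_toNNReal']
        gcongr
        exact max_le (sum_sum_mul_mul_min_le ht c u hu) (by positivity)

lemma lintegral_exp_riemannStieltjesSum_le (hB : IsBrownianMotion P t B) (ht : 0 ≤ t)
    {h : ℝ → ℝ} (hh : IntervalIntegrable h volume 0 (2 * π)) (n : ℕ) :
    ∫⁻ ω, ENNReal.ofReal (exp (riemannStieltjesSum (2 * π) h (fun u => B u ω) n)) ∂P ≤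
      ENNReal.ofReal (exp (t * (2 * π) * (∫ u in 0..2 * π, ‖h u‖) ^ 2 / 2)) := by
  set c : Fin n → ℝ := fun i => ∫ u in 2 * π * (i : ℕ) / n..2 * π * (i + 1 : ℕ) / n, h u
  set p : Fin n → ℝ := fun i => 2 * π * (i + 1 : ℕ) / n
  have hRS : ∀ ω, riemannStieltjesSum (2 * π) h (fun u => B u ω) n = ∑ i, c i * B (p i) ω := by
    intro ω
    rw [riemannStieltjesSum, Finset.sum_range]
    exact Finset.sum_congr rfl fun i _ => mul_comm _ _
  have hc : ∑ i, |c i| ≤ ∫ u in 0..2 * π, ‖h u‖ := by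
    simpa only [Finset.sum_range, Real.norm_eq_abs] using
      sum_norm_integral_uniformPartition_le (n := n) hh two_pi_pos.le
  simp_rw [hRS]
  refine (hB.lintegral_exp_sum_le ht c p fun i =>
    mul_natCast_div_mem_Icc two_pi_pos.le i.isLt).trans ?_
  gcongr

theorem integrable_exp_intervalIntegral_mul (hB : IsBrownianMotion P t B) (ht : 0 ≤ t)
    {h : ℝ → ℝ} (hh : IntervalIntegrable h volume 0 (2 * π)) :
    Integrable (fun ω => exp (∫ u in 0..2 * π, B u ω * h u)) P := by
  have hT : 0 ≤ 2 * π := two_pi_pos.le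
  have hmeas : StronglyMeasurable fun ω => ∫ u in 0..2 * π, B u ω * h u :=
    stronglyMeasurable_intervalIntegral_smul hh hT hB.measurable hB.continuous_paths
  refine ⟨(continuous_exp.comp_stronglyMeasurable hmeas).aestronglyMeasurable, ?_⟩
  rw [hasFiniteIntegral_iff_ofReal (ae_of_all _ fun ω => (exp_pos _).le)]
  set S := fun n ω => ENNReal.ofReal (exp (riemannStieltjesSum (2 * π) h (fun u => B u ω) n))
  have hS : ∀ ω, Tendsto (fun n => S n ω) atTop
      (𝓝 (ENNReal.ofReal (exp (∫ u in 0..2 * π, B u ω * h u)))) := fun ω =>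
    ((ENNReal.continuous_ofReal.comp continuous_exp).tendsto _).comp
      (tendsto_riemannStieltjesSum hh (hB.continuous_paths ω) hT)
  calc ∫⁻ ω, ENNReal.ofReal (exp (∫ u in 0..2 * π, B u ω * h u)) ∂P
      = ∫⁻ ω, liminf (fun n => S n ω) atTop ∂P := lintegral_congr fun ω => (hS ω).liminf_eq.symm
    _ ≤ liminf (fun n => ∫⁻ ω, S n ω ∂P) atTop :=
        lintegral_liminf_le fun n => measurable_exp.ennreal_ofReal.comp
          (stronglyMeasurable_riemannStieltjesSum hB.measurable _ h n).measurable
    _ ≤ ENNReal.ofReal (exp (t * (2 * π) * (∫ u in 0..2 * π, ‖h u‖) ^ 2 / 2)) :=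
        (liminf_le_liminf (Eventually.of_forall
          (hB.lintegral_exp_riemannStieltjesSum_le ht hh))).trans (liminf_const _).le
    _ < ∞ := ENNReal.ofReal_lt_top

end IsBrownianMotion

/-- The loop Gamma functional is well defined: for `t > 0`, `B` a Brownian motion with
variance parameter `t` on `[0,2π]`, `μ ∈ L²([0,2π],ℝ)` with `μ ≥ 0` a.e., and
`z : [0,2π] → ℂ` with `Re z, Im z ∈ L²([0,2π])`, the complex random variable
`exp(∫₀^{2π} B_u z(u) du - ∫₀^{2π} μ(u) e^{B_u} du)` is integrable, so that
`Γ̂_μ(z) = E[exp(∫₀^{2π} B_u z(u) du - ∫₀^{2π} μ(u) e^{B_u} du)]` is well defined. -/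
theorem loopGamma_well_defined {Ω : Type*} [MeasurableSpace Ω] (P : Measure Ω)
    (t : ℝ) (ht : 0 < t) (B : ℝ → Ω → ℝ) (hB : IsBrownianMotion P t B)
    (μ : ℝ → ℝ) (hμ2 : MemLp μ 2 (volume.restrict (Set.Ioc 0 (2 * π))))
    (hμ0 : ∀ᵐ u ∂(volume.restrict (Set.Ioc 0 (2 * π))), 0 ≤ μ u)
    (z : ℝ → ℂ)
    (hzRe : MemLp (fun u => (z u).re) 2 (volume.restrict (Set.Ioc 0 (2 * π))))
    (hzIm : MemLp (fun u => (z u).im) 2 (volume.restrict (Set.Ioc 0 (2 * π)))) :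
    Integrable (fun ω => Complex.exp
      ((∫ u in (0 : ℝ)..(2 * π), (B u ω : ℂ) * z u)
        - ((∫ u in (0 : ℝ)..(2 * π), μ u * Real.exp (B u ω) : ℝ) : ℂ))) P := by
  have hT : 0 ≤ 2 * π := two_pi_pos.le
  have hz : IntervalIntegrable z volume 0 (2 * π) :=
    (intervalIntegrable_iff_integrableOn_Ioc_of_le hT).2 <| Integrable.re_im_iff.1
      ⟨(hzRe.intervalIntegrable one_le_two hT).1, (hzIm.intervalIntegrable one_le_two hT).1⟩
  have hBz : ∀ ω, ∫ u in 0..2 * π, (B u ω : ℂ) * z u = ∫ u in 0..2 * π, B u ω • z u :=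
    fun ω => by simp_rw [Complex.real_smul]
  refine (hB.integrable_exp_intervalIntegral_mul ht.le
    (hzRe.intervalIntegrable one_le_two hT)).mono' ?_ (ae_of_all _ fun ω => ?_)
  · have hBzm := stronglyMeasurable_intervalIntegral_smul hz hT hB.measurable hB.continuous_paths
    have hμm : StronglyMeasurable fun ω => ∫ u in 0..2 * π, μ u * exp (B u ω) := by
      simpa only [smul_eq_mul, mul_comm] using
        stronglyMeasurable_intervalIntegral_smul (hμ2.intervalIntegrable one_le_two hT) hT
          (fun u => (hB.measurable u).exp) fun ω => (hB.continuous_paths ω).rexp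
    simp_rw [hBz]
    exact (Complex.continuous_exp.comp_stronglyMeasurable
      (hBzm.sub (Complex.continuous_ofReal.comp_stronglyMeasurable hμm))).aestronglyMeasurable
  · have hμB : 0 ≤ ∫ u in 0..2 * π, μ u * exp (B u ω) := by
      rw [intervalIntegral.integral_of_le hT]
      exact integral_nonneg_of_ae (hμ0.mono fun u hu => mul_nonneg hu (exp_pos _).le)
    rw [hBz, Complex.norm_exp, Complex.sub_re, Complex.ofReal_re, re_intervalIntegral_real_smul
      (hz.continuousOn_smul (by rw [uIcc_of_le hT]; exact hB.continuous_paths ω))]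
    exact exp_le_exp.2 (sub_le_self _ hμB)
end
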